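/- arXiv:1506.09192 — 2 statements merged into one kernel-verified Lean document; each statement's English description precedes it below -/
import Mathlib

section
/- For every invertible complex n×n matrix G there exists a complex n×n matrix X with exp(X) = G; that is, the matrix exponential is surjective onto GL(n,ℂ). -/
/-!
Let `B` be the closed subalgebra generated by `G`: it is commutative and finite-dimensional, and
`G` is a unit of `B`. In a commutative Banach algebra, `exp` is a homomorphism from `(B, +)` to
`Bˣ`, and its range is a neighbourhood of `1` by the inverse function theorem; so the range is an
open, hence closed, subgroup of `Bˣ` and contains the identity component. Finally `Bˣ` is
path-connected: `1 + z • (G - 1)` is a unit off a finite set of `z : ℂ`, and a path from `0` to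
`1` in the complement of that set joins `1` to `G`.
-/

open NormedSpace Topology

theorem range_exp_mem_nhds_one (𝕂 : Type*) {A : Type*} [RCLike 𝕂] [NormedRing A]
    [NormedAlgebra 𝕂 A] [CompleteSpace A] : Set.range (exp : A → A) ∈ 𝓝 1 := by
  have h := (hasStrictFDerivAt_exp_zero (𝕂 := 𝕂) (𝔸 := A)).map_nhds_eq_of_equiv
    (f' := ContinuousLinearEquiv.refl 𝕂 A)
  rw [← exp_zero, ← h]
  exact Filter.range_mem_map

section CommBanachAlgebra

variable (A : Type*) [NormedCommRing A] [NormedAlgebra ℚ A] [CompleteSpace A]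

def expSubgroup : Subgroup Aˣ where
  carrier := {u | (u : A) ∈ Set.range exp}
  one_mem' := ⟨0, exp_zero⟩
  mul_mem' := by
    rintro u v ⟨x, hx⟩ ⟨y, hy⟩
    exact ⟨x + y, by rw [exp_add, hx, hy, Units.val_mul]⟩
  inv_mem' := by
    rintro u ⟨x, hx⟩
    refine ⟨-x, Units.eq_inv_of_mul_eq_one_left ?_⟩
    rw [← hx, ← exp_add, add_neg_cancel, exp_zero]

theorem isOpen_expSubgroup (𝕂 : Type*) [RCLike 𝕂] [NormedAlgebra 𝕂 A] :
    IsOpen (expSubgroup A : Set Aˣ) :=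
  (expSubgroup A).isOpen_of_mem_nhds (g := 1) <|
    Units.continuous_val.continuousAt.preimage_mem_nhds (x := 1) (range_exp_mem_nhds_one 𝕂)

variable {A} in
theorem exists_exp_eq_of_mem_connectedComponent (𝕂 : Type*) [RCLike 𝕂] [NormedAlgebra 𝕂 A]
    {u : Aˣ} (hu : u ∈ connectedComponent 1) : ∃ x, exp x = (u : A) :=
  have hopen := isOpen_expSubgroup A 𝕂
  IsClopen.connectedComponent_subset ⟨(expSubgroup A).isClosed_of_isOpen hopen, hopen⟩
    (expSubgroup A).one_mem hu

end CommBanachAlgebra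

section FiniteDimensional

variable {K A : Type*} [Field K] [Ring A] [Algebra K A]

theorem spectrum_finite_of_finiteDimensional [FiniteDimensional K A] (a : A) :
    (spectrum K a).Finite := by
  refine (Module.End.finite_spectrum (Algebra.lmul K A a)).subset fun r hr hunit => hr ?_
  rw [spectrum.mem_resolventSet_iff, ← AlgHom.commutes (Algebra.lmul K A), ← map_sub,
    Module.End.isUnit_iff] at hunit
  exact IsUnit.isUnit_iff_mulLeft_bijective.2 hunit

theorem Subalgebra.isUnit_of_isUnit_coe {B : Subalgebra K A} [FiniteDimensional K B] {x : B}
    (hx : IsUnit (x : A)) : IsUnit x := by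
  have := IsArtinianRing.of_finite K B
  exact IsArtinianRing.isUnit_iff_isRegular.2
    ⟨fun a b h => Subtype.ext (hx.isRegular.1 (congrArg Subtype.val h)),
     fun a b h => Subtype.ext (hx.isRegular.2 (congrArg Subtype.val h))⟩

end FiniteDimensional

theorem setOf_not_isUnit_one_add_smul_sub_one_subset {K A : Type*} [Field K] [Ring A]
    [Algebra K A] (a : A) :
    {z : K | ¬IsUnit (1 + z • (a - 1))} ⊆ (fun z => 1 - z⁻¹) ⁻¹' spectrum K a := by
  intro z hz
  have hz0 : z ≠ 0 := by rintro rfl; simp at hz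
  refine fun hunit => hz ?_
  have hscalar : -z * (1 - z⁻¹) = 1 - z := by field_simp; ring
  have hfactor : 1 + z • (a - 1) = algebraMap K A (-z) * (algebraMap K A (1 - z⁻¹) - a) := by
    rw [Algebra.algebraMap_eq_smul_one, Algebra.algebraMap_eq_smul_one, smul_mul_assoc, one_mul,
      smul_sub (-z), smul_smul, hscalar]
    module
  rw [hfactor]
  exact ((isUnit_iff_ne_zero.2 (neg_ne_zero.2 hz0)).map _).mul hunit

theorem Units.joined_one_of_countable_spectrum {A : Type*} [NormedRing A] [NormedAlgebra ℂ A]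
    [CompleteSpace A] {u : Aˣ} (hu : (spectrum ℂ (u : A)).Countable) : Joined 1 u := by
  set S := {z : ℂ | ¬IsUnit (1 + z • ((u : A) - 1))}
  have hS : S.Countable :=
    (hu.preimage_of_injOn (sub_right_injective.comp inv_injective).injOn).mono
      (setOf_not_isUnit_one_add_smul_sub_one_subset _)
  have h0 : (0 : ℂ) ∈ Sᶜ := by simp [S]
  have h1 : (1 : ℂ) ∈ Sᶜ := by simp [S]
  obtain ⟨γ, hγ⟩ := (hS.isPathConnected_compl_of_one_lt_rank
    (by rw [Complex.rank_real_complex]; norm_num)).joinedIn 0 h0 1 h1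
  have hunit (t : unitInterval) : IsUnit (1 + γ t • ((u : A) - 1)) := not_not.1 (hγ t)
  refine ⟨⟨⟨fun t => (hunit t).unit, ?_⟩, ?_, ?_⟩⟩
  · rw [Units.isOpenEmbedding_val.continuous_iff]
    exact continuous_const.add (γ.continuous.smul continuous_const)
  · ext; simp
  · ext; simp

theorem exists_exp_eq_of_isUnit {A : Type*} [NormedRing A] [NormedAlgebra ℂ A]
    [FiniteDimensional ℂ A] {a : A} (ha : IsUnit a) : ∃ x, exp x = a := by
  have := FiniteDimensional.complete ℂ A
  let B := Algebra.elemental ℂ a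
  let : NormedCommRing B := { (inferInstance : NormedRing B) with mul_comm := mul_comm }
  let : NormedAlgebra ℚ B := .restrictScalars ℚ ℂ B
  let : NormedAlgebra ℚ A := .restrictScalars ℚ ℂ A
  obtain ⟨b, hb⟩ : IsUnit (⟨a, Algebra.elemental.self_mem ℂ a⟩ : B) :=
    Subalgebra.isUnit_of_isUnit_coe ha
  have hb_one : b ∈ connectedComponent 1 := pathComponent_subset_component 1 <|
    Units.joined_one_of_countable_spectrum (spectrum_finite_of_finiteDimensional _).countable
  obtain ⟨x, hx⟩ := exists_exp_eq_of_mem_connectedComponent ℂ hb_one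
  refine ⟨x, ?_⟩
  rw [← Subalgebra.coe_val, ← map_exp B.val continuous_subtype_val, hx, hb]
  rfl

theorem matrix_exp_surjective_onto_GL (n : ℕ) (G : Matrix (Fin n) (Fin n) ℂ)
    (hG : IsUnit G) : ∃ X : Matrix (Fin n) (Fin n) ℂ, NormedSpace.exp X = G := by
  -- `exp` depends only on the topology, so any algebra norm on matrices will do.
  let := Matrix.linftyOpNormedRing (n := Fin n) (α := ℂ)
  let := Matrix.linftyOpNormedAlgebra (R := ℂ) (n := Fin n) (α := ℂ)
  exact exists_exp_eq_of_isUnit hG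
end

section
/- If X and Y are complex n×n matrices with exp(X) = exp(Y) = G and both X and Y commute with G, and all eigenvalues of X and of Y have real part in the half-open interval [0,1) after dividing by 2πi (i.e., X = 2πi·L with eigenvalues of L having real part in [0,1), similarly for Y), then X and Y are conjugate by an invertible matrix commuting with G. (Special case: if moreover G is diagonalizable, then X = Y whenever X and Y are simultaneously diagonalizable with G's eigenbasis.) -/
/-!
The logarithms `X`, `Y` have spectra in the strip `0 ≤ Im < 2π`, on which `exp` is injective.
The key fact: if every eigenvalue `α` of an operator `f` on a finite-dimensional space with
`exp α = 1` is `0`, then `exp f v = v` implies `f v = 0`. Indeed, on the generalized eigenspace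
for `μ` we have `exp f = exp μ • exp (f - μ)`, which fixes `w` only if `(f - μ) w = 0`, and then
`exp μ = 1`, so `μ = 0`.

Apply this to `ad Y = L_Y - R_Y`: its exponential `L_{exp Y} R_{exp (-Y)}` fixes `X`, which
commutes with `G = exp Y`, and its eigenvalues are differences of eigenvalues of `Y`; so `X`
and `Y` commute. Apply it again to `L_X - L_Y`, whose exponential `L_{exp X exp (-Y)}` is the
identity, at `1`: this gives `X = Y`, so `U = 1` works.
-/

open Complex

namespace Module.End

variable {K V : Type*} [Field K] [IsAlgClosed K] [AddCommGroup V] [Module K V]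
  [FiniteDimensional K V]

theorem HasEigenvalue.exists_sub_of_commute {P Q : End K V} (hPQ : Commute P Q) {α : K}
    (hα : (P - Q).HasEigenvalue α) :
    ∃ β γ, P.HasEigenvalue β ∧ Q.HasEigenvalue γ ∧ α = β - γ := by
  set W := (P - Q).eigenspace α
  have hPW : Set.MapsTo P W W :=
    mapsTo_genEigenspace_of_comm ((Commute.refl P).sub_left hPQ.symm) α 1
  have : Nontrivial W := Submodule.nontrivial_iff_ne_bot.mpr hα
  obtain ⟨β, hβ⟩ := exists_eigenvalue (P.restrict hPW)
  obtain ⟨⟨w, hwα⟩, hwβ⟩ := hβ.exists_hasEigenvector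
  have hPw : P w = β • w := congrArg Subtype.val hwβ.apply_eq_smul
  have hw : w ≠ 0 := by simpa using hwβ.2
  have hQw : Q w = (β - α) • w := by
    have hdiff : P w - Q w = α • w := mem_eigenspace_iff.mp hwα
    rw [sub_smul, ← hPw, ← hdiff, sub_sub_cancel]
  exact ⟨β, β - α, hasEigenvalue_of_hasEigenvector ⟨mem_eigenspace_iff.mpr hPw, hw⟩,
    hasEigenvalue_of_hasEigenvector ⟨mem_eigenspace_iff.mpr hQw, hw⟩, by ring⟩

end Module.End

namespace spectrum

variable {R A : Type*} [CommRing R] [Ring A] [Algebra R A]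

theorem mem_of_mul_eq_smul {a b : A} {r : R} (hb : b ≠ 0) (h : a * b = r • b) :
    r ∈ spectrum R a := by
  by_contra hr
  refine hb ((notMem_iff.mp hr).mul_right_eq_zero.mp ?_)
  rw [sub_mul, ← Algebra.smul_def, h, sub_self]

theorem mem_of_mul_eq_smul' {a b : A} {r : R} (hb : b ≠ 0) (h : b * a = r • b) :
    r ∈ spectrum R a := by
  by_contra hr
  refine hb ((notMem_iff.mp hr).mul_left_eq_zero.mp ?_)
  rw [mul_sub, ← Algebra.commutes, ← Algebra.smul_def, h, sub_self]

end spectrum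

namespace ContinuousLinearMap

variable {V : Type*} [NormedAddCommGroup V] [NormedSpace ℂ V]

theorem exp_apply_eq_add_of_sq_apply_eq_zero [CompleteSpace V] (N : V →L[ℂ] V) {w : V}
    (hw : (N ^ 2) w = 0) : NormedSpace.exp N w = w + N w := by
  let _ : NormedAlgebra ℚ (V →L[ℂ] V) := NormedAlgebra.restrictScalars ℚ ℂ _
  have hsum : HasSum (fun k => ((k.factorial : ℂ)⁻¹ • N ^ k) w) (NormedSpace.exp N w) :=
    (NormedSpace.exp_series_hasSum_exp' (𝕂 := ℂ) N).mapL (apply ℂ V w)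
  rw [← hsum.tsum_eq, tsum_eq_sum (s := Finset.range 2)]
  · simp [Finset.sum_range_succ]
  · intro k hk
    rw [Finset.mem_range, not_lt] at hk
    rw [smul_apply, ← Nat.sub_add_cancel hk, pow_add, mul_apply_eq_comp, hw, map_zero, smul_zero]

theorem exp_apply_of_sq_sub_smul_apply_eq_zero [CompleteSpace V] (f : V →L[ℂ] V) (μ : ℂ)
    {w : V} (hw : ((f - μ • (1 : V →L[ℂ] V)) ^ 2) w = 0) :
    NormedSpace.exp f w = exp μ • (w + (f - μ • 1) w) := by
  let _ : NormedAlgebra ℚ (V →L[ℂ] V) := NormedAlgebra.restrictScalars ℚ ℂ _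
  have hf : f = algebraMap ℂ (V →L[ℂ] V) μ + (f - μ • 1) := by
    rw [Algebra.algebraMap_eq_smul_one, add_sub_cancel]
  rw [hf, NormedSpace.exp_add_of_commute (Algebra.commute_algebraMap_left _ _),
    ← NormedSpace.algebraMap_exp_comm, ← exp_eq_exp_ℂ, ← hf, Algebra.algebraMap_eq_smul_one,
    smul_mul_assoc, one_mul, smul_apply, exp_apply_eq_add_of_sq_apply_eq_zero _ hw]

theorem sub_smul_one_apply_eq_zero_of_exp_apply_eq_self [CompleteSpace V] (f : V →L[ℂ] V)
    (μ : ℂ) {w : V} (hw : ∃ m, ((f - μ • (1 : V →L[ℂ] V)) ^ m) w = 0)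
    (hexp : NormedSpace.exp f w = w) : (f - μ • 1) w = 0 := by
  obtain ⟨m, hm⟩ := hw
  induction m generalizing w with
  | zero => simp_all
  | succ m ih =>
    set N := f - μ • (1 : V →L[ℂ] V)
    have hN : Commute N (NormedSpace.exp f) :=
      ((Commute.refl f).sub_left ((Commute.one_left f).smul_left μ)).exp_right
    have hNexp : NormedSpace.exp f (N w) = N w := by
      rw [← mul_apply_eq_comp, ← hN.eq, mul_apply_eq_comp, hexp]
    have hNNw : N (N w) = 0 :=
      ih hNexp (by rw [← mul_apply_eq_comp, ← pow_succ]; exact hm)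
    have hN2 : (N ^ 2) w = 0 := by rwa [sq, mul_apply_eq_comp]
    have hN2' : (N ^ 2) (N w) = 0 := by rw [sq, mul_apply_eq_comp, hNNw, map_zero]
    have hw' : exp μ • (w + N w) = w := by
      rw [← exp_apply_of_sq_sub_smul_apply_eq_zero f μ hN2, hexp]
    have hNw' : exp μ • N w = N w := by
      have h := exp_apply_of_sq_sub_smul_apply_eq_zero f μ hN2'
      rwa [hNNw, add_zero, hNexp, eq_comm] at h
    by_cases hμ : exp μ = 1
    · rw [hμ, one_smul] at hw'
      exact left_eq_add.mp hw'.symm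
    · have h : (exp μ - 1) • N w = 0 := by rw [sub_smul, one_smul, hNw', sub_self]
      exact (smul_eq_zero.mp h).resolve_left (sub_ne_zero.mpr hμ)

theorem apply_eq_zero_of_exp_apply_eq_self [FiniteDimensional ℂ V] (f : V →L[ℂ] V)
    (hf : ∀ α, Module.End.HasEigenvalue (f : V →ₗ[ℂ] V) α → exp α = 1 → α = 0) {v : V}
    (hv : NormedSpace.exp f v = v) : f v = 0 := by
  set F : Module.End ℂ V := (f : V →ₗ[ℂ] V)
  set K : Submodule ℂ V := LinearMap.ker ((NormedSpace.exp f - 1 : V →L[ℂ] V) : V →ₗ[ℂ] V)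
  have hexpK : ∀ w, w ∈ K ↔ NormedSpace.exp f w = w := fun w => by
    simp [K, sub_eq_zero]
  have hFK : ∀ w ∈ K, F w ∈ K := fun w hw => by
    rw [hexpK] at hw ⊢
    change NormedSpace.exp f (f w) = f w
    rw [← mul_apply_eq_comp, ← ((Commute.refl f).exp_right).eq, mul_apply_eq_comp, hw]
  have hKF : ∀ μ, K ⊓ F.maxGenEigenspace μ ≤ LinearMap.ker F := by
    rintro μ w ⟨hwK, hwμ⟩
    have hNw : (f - μ • 1) w = 0 := by
      refine sub_smul_one_apply_eq_zero_of_exp_apply_eq_self f μ ?_ ((hexpK w).mp hwK)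
      obtain ⟨k, hk⟩ := (F.mem_maxGenEigenspace μ w).mp hwμ
      rw [← toLinearMap_one, ← toLinearMap_smul, ← toLinearMap_sub, ← toLinearMap_pow] at hk
      exact ⟨k, hk⟩
    have hfw : f w = μ • w := by
      rwa [sub_apply, smul_apply, one_apply_eq_self, sub_eq_zero] at hNw
    by_cases hw0 : w = 0
    · simp [hw0]
    have hexpμ : exp μ = 1 := by
      have h := exp_apply_of_sq_sub_smul_apply_eq_zero f μ (w := w)
        (by rw [sq, mul_apply_eq_comp, hNw, map_zero])
      rw [hNw, add_zero, (hexpK w).mp hwK] at h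
      exact smul_left_injective ℂ hw0 (by simpa using h.symm)
    have hμ : μ = 0 := hf μ (Module.End.hasEigenvalue_of_hasEigenvector
      ⟨Module.End.mem_eigenspace_iff.mpr hfw, hw0⟩) hexpμ
    rw [LinearMap.mem_ker]
    exact hfw.trans (by rw [hμ, zero_smul])
  have hvK : v ∈ ⨆ μ, K ⊓ F.maxGenEigenspace μ := by
    rw [← Submodule.inf_iSup_genEigenspace hFK, F.iSup_maxGenEigenspace_eq_top, inf_top_eq]
    exact (hexpK v).mpr hv
  exact iSup_le hKF hvK

theorem sub_apply_eq_zero_of_exp_sub_apply_eq_self [FiniteDimensional ℂ V] {P Q : V →L[ℂ] V}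
    (hPQ : Commute P Q)
    (hspec : ∀ β γ, Module.End.HasEigenvalue (P : V →ₗ[ℂ] V) β →
      Module.End.HasEigenvalue (Q : V →ₗ[ℂ] V) γ → exp β = exp γ → β = γ)
    {v : V} (hv : NormedSpace.exp (P - Q) v = v) : (P - Q) v = 0 := by
  refine apply_eq_zero_of_exp_apply_eq_self _ (fun α hα hexp => ?_) hv
  have hPQ' : Commute (P : V →ₗ[ℂ] V) Q := by
    rw [Commute, SemiconjBy, ← toLinearMap_mul, ← toLinearMap_mul, hPQ.eq]
  rw [toLinearMap_sub] at hα
  obtain ⟨β, γ, hβ, hγ, rfl⟩ := hα.exists_sub_of_commute hPQ'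
  rw [exp_sub, div_eq_one_iff_eq (exp_ne_zero γ)] at hexp
  exact sub_eq_zero.mpr (hspec β γ hβ hγ hexp)

variable (𝕜 A : Type*) [NontriviallyNormedField 𝕜] [NormedRing A] [NormedAlgebra 𝕜 A]

noncomputable def mulLeftRingHom : A →+* (A →L[𝕜] A) where
  toFun := mul 𝕜 A
  map_one' := by ext; simp
  map_mul' a b := by ext; simp [mul_assoc]
  map_zero' := map_zero _
  map_add' := map_add _

noncomputable def mulRightRingHom : Aᵐᵒᵖ →+* (A →L[𝕜] A) where
  toFun a := (mul 𝕜 A).flip a.unop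
  map_one' := by ext; simp
  map_mul' a b := by ext; simp [mul_assoc]
  map_zero' := by ext; simp
  map_add' a b := by ext; simp

theorem continuous_mulLeftRingHom : Continuous (mulLeftRingHom 𝕜 A) :=
  (mul 𝕜 A).continuous

theorem continuous_mulRightRingHom : Continuous (mulRightRingHom 𝕜 A) :=
  (mul 𝕜 A).flip.continuous.comp MulOpposite.continuous_unop

variable {𝕜 A}

theorem mem_spectrum_of_hasEigenvalue_mulLeftRingHom {a : A} {β : 𝕜}
    (h : Module.End.HasEigenvalue (mulLeftRingHom 𝕜 A a : A →ₗ[𝕜] A) β) :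
    β ∈ spectrum 𝕜 a := by
  obtain ⟨M, hM⟩ := h.exists_hasEigenvector
  exact spectrum.mem_of_mul_eq_smul hM.2 hM.apply_eq_smul

theorem mem_spectrum_of_hasEigenvalue_mulRightRingHom {a : A} {β : 𝕜}
    (h : Module.End.HasEigenvalue (mulRightRingHom 𝕜 A (.op a) : A →ₗ[𝕜] A) β) :
    β ∈ spectrum 𝕜 a := by
  obtain ⟨M, hM⟩ := h.exists_hasEigenvector
  exact spectrum.mem_of_mul_eq_smul' hM.2 hM.apply_eq_smul

end ContinuousLinearMap

open ContinuousLinearMap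

section FiniteDimensionalAlgebra

variable {A : Type*} [NormedRing A] [NormedAlgebra ℂ A] [FiniteDimensional ℂ A]

theorem commute_of_commute_exp {x y : A} (hy : Set.InjOn exp (spectrum ℂ y))
    (hx : Commute x (NormedSpace.exp y)) : Commute x y := by
  let _ : NormedAlgebra ℚ A := NormedAlgebra.restrictScalars ℚ ℂ A
  let _ : NormedAlgebra ℚ (A →L[ℂ] A) := NormedAlgebra.restrictScalars ℚ ℂ _
  set P := mulLeftRingHom ℂ A y
  set Q := mulRightRingHom ℂ A (.op y)
  have hPQ : Commute P Q := by ext; simp [P, Q, mulLeftRingHom, mulRightRingHom, mul_assoc]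
  have hexp : NormedSpace.exp (P - Q) x = x := by
    rw [sub_eq_add_neg, NormedSpace.exp_add_of_commute hPQ.neg_right, ← map_neg,
      ← MulOpposite.op_neg, ← NormedSpace.map_exp _ (continuous_mulLeftRingHom ℂ A),
      ← NormedSpace.map_exp _ (continuous_mulRightRingHom ℂ A), NormedSpace.exp_op,
      mul_apply_eq_comp]
    change NormedSpace.exp y * (x * NormedSpace.exp (-y)) = x
    rw [← mul_assoc, ← hx.eq, mul_assoc,
      ← NormedSpace.exp_add_of_commute (Commute.refl y).neg_right, add_neg_cancel,
      NormedSpace.exp_zero, mul_one]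
  have h := sub_apply_eq_zero_of_exp_sub_apply_eq_self hPQ
    (fun β γ hβ hγ => hy (mem_spectrum_of_hasEigenvalue_mulLeftRingHom hβ)
      (mem_spectrum_of_hasEigenvalue_mulRightRingHom hγ)) hexp
  exact (sub_eq_zero.mp h).symm

theorem eq_of_exp_eq_of_commute {x y : A} (hxy : Commute x y)
    (hspec : ∀ β ∈ spectrum ℂ x, ∀ γ ∈ spectrum ℂ y, exp β = exp γ → β = γ)
    (hexp : NormedSpace.exp x = NormedSpace.exp y) : x = y := by
  let _ : NormedAlgebra ℚ A := NormedAlgebra.restrictScalars ℚ ℂ A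
  let _ : NormedAlgebra ℚ (A →L[ℂ] A) := NormedAlgebra.restrictScalars ℚ ℂ _
  set L := mulLeftRingHom ℂ A
  have hexp' : NormedSpace.exp (L x - L y) 1 = 1 := by
    rw [← map_sub, ← NormedSpace.map_exp _ (continuous_mulLeftRingHom ℂ A), sub_eq_add_neg,
      NormedSpace.exp_add_of_commute hxy.neg_right, hexp,
      ← NormedSpace.exp_add_of_commute (Commute.refl y).neg_right, add_neg_cancel,
      NormedSpace.exp_zero]
    exact mul_one 1
  have h := sub_apply_eq_zero_of_exp_sub_apply_eq_self (hxy.map L)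
    (fun β γ hβ hγ => hspec β (mem_spectrum_of_hasEigenvalue_mulLeftRingHom hβ)
      γ (mem_spectrum_of_hasEigenvalue_mulLeftRingHom hγ)) hexp'
  simpa [L, mulLeftRingHom, sub_eq_zero] using h

end FiniteDimensionalAlgebra

theorem Complex.injOn_exp_two_pi_I_mul :
    Set.InjOn (fun b : ℂ => exp (2 * Real.pi * I * b)) {b | b.re ∈ Set.Ico (0 : ℝ) 1} := by
  intro b₁ hb₁ b₂ hb₂ h
  obtain ⟨n, hn⟩ := exp_eq_exp_iff_exists_int.mp h
  have hb : b₁ = b₂ + n := mul_left_cancel₀ two_pi_I_ne_zero (by rw [hn]; ring)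
  have hre : b₁.re = b₂.re + n := by simpa using congrArg re hb
  obtain ⟨h₁, h₁'⟩ := hb₁
  obtain ⟨h₂, h₂'⟩ := hb₂
  have hn0 : n = 0 := by
    have hlt : (n : ℝ) < 1 := by linarith
    have hgt : (-1 : ℝ) < n := by linarith
    have : n < 1 := by exact_mod_cast hlt
    have : -1 < n := by exact_mod_cast hgt
    omega
  simpa [hn0] using hb

open scoped Pointwise in
theorem eq_of_exp_eq_of_mem_spectrum_two_pi_I_smul {R : Type*} [Ring R] [Algebra ℂ R]
    {L₁ L₂ : R} (hL₁ : ∀ μ ∈ spectrum ℂ L₁, μ.re ∈ Set.Ico (0 : ℝ) 1)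
    (hL₂ : ∀ μ ∈ spectrum ℂ L₂, μ.re ∈ Set.Ico (0 : ℝ) 1) {β γ : ℂ}
    (hβ : β ∈ spectrum ℂ ((2 * Real.pi * I) • L₁)) (hγ : γ ∈ spectrum ℂ ((2 * Real.pi * I) • L₂))
    (h : exp β = exp γ) : β = γ := by
  have hspec (L : R) :
      spectrum ℂ ((2 * Real.pi * I) • L) = Units.mk0 _ two_pi_I_ne_zero • spectrum ℂ L :=
    spectrum.unit_smul_eq_smul L (Units.mk0 _ two_pi_I_ne_zero)
  rw [hspec] at hβ hγ
  obtain ⟨b₁, hb₁, rfl⟩ := hβ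
  obtain ⟨b₂, hb₂, rfl⟩ := hγ
  exact congrArg _ (Complex.injOn_exp_two_pi_I_mul (hL₁ b₁ hb₁) (hL₂ b₂ hb₂) h)

theorem matrix_log_unique_up_to_conjugation_general (n : ℕ)
    (G X Y L₁ L₂ : Matrix (Fin n) (Fin n) ℂ)
    (hX : NormedSpace.exp X = G) (hY : NormedSpace.exp Y = G)
    (hXG : X * G = G * X)
    (hXL : X = (2 * Real.pi * I) • L₁) (hYL : Y = (2 * Real.pi * I) • L₂)
    (hL₁ : ∀ μ ∈ spectrum ℂ L₁, μ.re ∈ Set.Ico (0 : ℝ) 1)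
    (hL₂ : ∀ μ ∈ spectrum ℂ L₂, μ.re ∈ Set.Ico (0 : ℝ) 1) :
    ∃ U : Matrix (Fin n) (Fin n) ℂ, IsUnit U ∧ U * G = G * U ∧ X * U = U * Y := by
  open scoped Matrix.Norms.Operator in
  have hXY : Commute X Y := commute_of_commute_exp
    (fun β hβ γ hγ => eq_of_exp_eq_of_mem_spectrum_two_pi_I_smul hL₂ hL₂ (hYL ▸ hβ) (hYL ▸ hγ))
    (hY ▸ hXG)
  open scoped Matrix.Norms.Operator in
  have hXeqY : X = Y := eq_of_exp_eq_of_commute hXY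
    (fun β hβ γ hγ => eq_of_exp_eq_of_mem_spectrum_two_pi_I_smul hL₁ hL₂ (hXL ▸ hβ) (hYL ▸ hγ))
    (hX.trans hY.symm)
  exact ⟨1, isUnit_one, by rw [one_mul, mul_one], by rw [hXeqY, one_mul, mul_one]⟩

theorem matrix_log_unique_up_to_conjugation (n : ℕ)
    (G X Y L₁ L₂ : Matrix (Fin n) (Fin n) ℂ)
    (hX : NormedSpace.exp X = G) (hY : NormedSpace.exp Y = G)
    (hXG : X * G = G * X) (hYG : Y * G = G * Y)
    (hXL : X = (2 * Real.pi * I) • L₁) (hYL : Y = (2 * Real.pi * I) • L₂)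
    (hL₁ : ∀ μ ∈ spectrum ℂ L₁, μ.re ∈ Set.Ico (0 : ℝ) 1)
    (hL₂ : ∀ μ ∈ spectrum ℂ L₂, μ.re ∈ Set.Ico (0 : ℝ) 1) :
    ∃ U : Matrix (Fin n) (Fin n) ℂ, IsUnit U ∧ U * G = G * U ∧ X * U = U * Y :=
  matrix_log_unique_up_to_conjugation_general n G X Y L₁ L₂ hX hY hXG hXL hYL hL₁ hL₂
end
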